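/- Assume χ(α_i, δ̂) = 1 for all i ∈ I, where δ̂ := α_0 + Σ_{t=1}^{N−1} α_t ∈ ⊕ℤα_i, and let Ψ : U^♮_χ → End_K(K^N ⊗_K K[t,t^{−1}]) be the K-algebra homomorphism of the vector representation (determined by parameters z_i, u_i ∈ K^×, with Ψ(K_∂)(e_k⊗t^m) = q^m e_k⊗t^m, Ψ(L_∂)(e_k⊗t^m) = q^{−m} e_k⊗t^m, Ψ(K_{α_i}) = z_i Σ_{t=1}^N (Π_{s=0}^{t−1} x_{is}^{−1}) e_{tt}, Ψ(L_{α_i}) = z_i q^{−2(ε_N,α_i)} Σ_{t=1}^N (Π_{s=0}^{t−1} x_{si}) e_{tt}, Ψ(E_0) = z_0u_0 d̄_1 q^{d̄_1}(q−q^{−1}) e_{N1}⊗t, Ψ(E_i) = −z_iu_i d̄_i q^{−d̄_i}(Π_{s=0}^{i−1} x_{is}^{−1})(q−q^{−1}) e_{i,i+1} for i ≥ 1, Ψ(F_0) = u_0^{−1} e_{1N}⊗t^{−1}, Ψ(F_i) = u_i^{−1} e_{i+1,i} for i ≥ 1, where x_{ij} := χ(α_i,α_j)). Let Z := Σ_{i=0}^{n−1}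 a_i ⌊A_i,B_i⌋ be the element of U^♮_χ built from B_{n−1} := E_n, B_i := ⌊E_{N−i−1},⌊B_{i+1},E_{i+1}⌋⌋ (i = n−2,…,0), A_0 := E_0, A_i := ⌊E_{N−i},⌊A_{i−1},E_i⌋⌋ (i = 1,…,n−1), a_0 := 1, a_i := a_{i−1}·χ(δ̂,α_{N−i})·χ(−α_i, Σ_{t=i+1}^{N−i−1}α_t)·χ(Σ_{t=i}^{N−i−1}α_t, −α_{N−i}). Then there exists b ∈ K^× such that Ψ(Z) = b·(1_N ⊗ t), i.e. Ψ(Z)(e_k ⊗ t^m) = b·e_k ⊗ t^{m+1} for all k ∈ {1,…,N} and m ∈ ℤ. -/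

import Mathlib

/-- Generators of the quantum superalgebra. -/
inductive QGen (Λ I : Type) : Type
  | Kg : Λ → QGen Λ I
  | Lg : Λ → QGen Λ I
  | Eg : I → QGen Λ I
  | Fg : I → QGen Λ I

/-- The lattice `V̂ = (⊕_{i∈I} ℤα_i) ⊕ ℤ∂` for `I = {0,…,2n−1}`. -/
abbrev Lam (n : ℕ) : Type := (Fin (2 * n) → ℤ) × ℤ

/-- The simple roots `α_i` as elements of `V̂`. -/
def αr (n : ℕ) (i : Fin (2 * n)) : Lam n := (Pi.single i 1, 0)

/-- The element `∂` of `V̂`. -/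
def dr (n : ℕ) : Lam n := (0, 1)

/-- `α` reindexed by `ℕ` (with junk value `0` out of range). -/
def αn (n : ℕ) (t : ℕ) : Lam n := if h : t < 2 * n then αr n ⟨t, h⟩ else 0

/-- `δ̂ = α_0 + Σ_{t=1}^{N−1} α_t`. -/
def hatδ (n : ℕ) : Lam n := ∑ t ∈ Finset.range (2 * n), αn n t

/-- `ε`-coordinates of `α_i` : `α_0 = δ̂ − ε_1 + ε_N`, `α_i = ε_i − ε_{i+1}`
(`ε`-indices 0-based). -/
def wVec (n : ℕ) (i : ℕ) : Fin (2 * n) → ℤ := fun t =>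
  if i = 0 then (if (t : ℕ) = 2 * n - 1 then 1 else 0) - (if (t : ℕ) = 0 then 1 else 0)
  else (if (t : ℕ) = i - 1 then 1 else 0) - (if (t : ℕ) = i then 1 else 0)

/-- The bilinear-form values `(α_i, α_j)`, from `(ε_s,ε_t) = δ_{st} d̄_s`. -/
def Bfm (n : ℕ) (i j : ℕ) : ℤ :=
  ∑ t : Fin (2 * n), (if (t : ℕ) < n then 1 else -1) * wVec n i t * wVec n j t

/-- `(ε_N, α_i)`. -/
def epsNdot (n : ℕ) (i : ℕ) : ℤ :=
  ∑ t : Fin (2 * n), (if (t : ℕ) < n then 1 else -1)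
    * (if (t : ℕ) = 2 * n - 1 then 1 else 0) * wVec n i t

section Defs

variable (K : Type) [Field K] (n : ℕ)

/-- The free algebra on the generators. -/
abbrev FA : Type := FreeAlgebra K (QGen (Lam n) (Fin (2 * n)))

def fK (a : Lam n) : FA K n := FreeAlgebra.ι K (QGen.Kg a)
def fL (a : Lam n) : FA K n := FreeAlgebra.ι K (QGen.Lg a)
def fE (i : Fin (2 * n)) : FA K n := FreeAlgebra.ι K (QGen.Eg i)
def fF (i : Fin (2 * n)) : FA K n := FreeAlgebra.ι K (QGen.Fg i)

variable (χ : Lam n → Lam n → Kˣ)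

/-- The `q`-bracket `⌊X,Y⌋ = XY − χ(μ,λ)⁻¹ YX` for `X` of degree `λ`, `Y` of
degree `μ` (free-algebra version, `E`-side). -/
def fbrE (lam mu : Lam n) (X Y : FA K n) : FA K n :=
  X * Y - ((((χ mu lam)⁻¹ : Kˣ) : K)) • (Y * X)

/-- The corresponding bracket on the `F`-side: the coefficient `χ(μ,λ)⁻¹` is
replaced by `χ(λ,μ)⁻¹`. -/
def fbrF (lam mu : Lam n) (X Y : FA K n) : FA K n :=
  X * Y - ((((χ lam mu)⁻¹ : Kˣ) : K)) • (Y * X)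

/-- The defining relations of the quantum affine superalgebra `U^♮_χ` of
`sl^{(1)}(n|n)`: the relations of `Ũ_χ` together with the Serre-type
relations for the `E_i` and the `F_i`. -/
inductive NRel : FA K n → FA K n → Prop
  | K0 : NRel (fK K n 0) 1
  | L0 : NRel (fL K n 0) 1
  | KK (a b : Lam n) : NRel (fK K n a * fK K n b) (fK K n (a + b))
  | LL (a b : Lam n) : NRel (fL K n a * fL K n b) (fL K n (a + b))
  | KL (a b : Lam n) : NRel (fK K n a * fL K n b) (fL K n b * fK K n a)
  | KE (a : Lam n) (i : Fin (2 * n)) :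
      NRel (fK K n a * fE K n i) ((χ a (αr n i) : K) • (fE K n i * fK K n a))
  | KF (a : Lam n) (i : Fin (2 * n)) :
      NRel (fK K n a * fF K n i) ((((χ a (αr n i))⁻¹ : Kˣ) : K) • (fF K n i * fK K n a))
  | LE (a : Lam n) (i : Fin (2 * n)) :
      NRel (fL K n a * fE K n i) ((((χ (αr n i) a)⁻¹ : Kˣ) : K) • (fE K n i * fL K n a))
  | LF (a : Lam n) (i : Fin (2 * n)) :
      NRel (fL K n a * fF K n i) ((χ (αr n i) a : K) • (fF K n i * fL K n a))
  | EFsame (i : Fin (2 * n)) :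
      NRel (fE K n i * fF K n i - fF K n i * fE K n i) (-fK K n (αr n i) + fL K n (αr n i))
  | EFne (i j : Fin (2 * n)) (h : i ≠ j) :
      NRel (fE K n i * fF K n j - fF K n j * fE K n i) 0
  | SE1 (i j : Fin (2 * n)) (h : Bfm n i j = 0) :
      NRel (fbrE K n χ (αr n i) (αr n j) (fE K n i) (fE K n j)) 0
  | SE2 (i j : Fin (2 * n)) (hne : i ≠ j) (h1 : -(2 * Bfm n i j) = Bfm n i i)
      (h2 : Bfm n i i ≠ 0) :
      NRel (fbrE K n χ (αr n i) (αr n i + αr n j) (fE K n i)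
        (fbrE K n χ (αr n i) (αr n j) (fE K n i) (fE K n j))) 0
  | SE3 (i j : Fin (2 * n)) (hne : i ≠ j) (h1 : -(Bfm n i j) = Bfm n i i)
      (h2 : Bfm n i i ≠ 0) :
      NRel (fbrE K n χ (αr n i) (αr n i + (αr n i + αr n j)) (fE K n i)
        (fbrE K n χ (αr n i) (αr n i + αr n j) (fE K n i)
          (fbrE K n χ (αr n i) (αr n j) (fE K n i) (fE K n j)))) 0
  | SE4 (i j k : Fin (2 * n)) (h1 : i ≠ j) (h2 : j ≠ k) (h3 : k ≠ i)
      (h4 : Bfm n i i = 0) (h5 : Bfm n j k = 0)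
      (h6 : -(Bfm n i j) = Bfm n i k) (h7 : Bfm n i k ≠ 0) :
      NRel (fbrE K n χ (αr n i + αr n j) (αr n i + αr n k)
        (fbrE K n χ (αr n i) (αr n j) (fE K n i) (fE K n j))
        (fbrE K n χ (αr n i) (αr n k) (fE K n i) (fE K n k))) 0
  | SF1 (i j : Fin (2 * n)) (h : Bfm n i j = 0) :
      NRel (fbrF K n χ (αr n i) (αr n j) (fF K n i) (fF K n j)) 0
  | SF2 (i j : Fin (2 * n)) (hne : i ≠ j) (h1 : -(2 * Bfm n i j) = Bfm n i i)
      (h2 : Bfm n i i ≠ 0) :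
      NRel (fbrF K n χ (αr n i) (αr n i + αr n j) (fF K n i)
        (fbrF K n χ (αr n i) (αr n j) (fF K n i) (fF K n j))) 0
  | SF3 (i j : Fin (2 * n)) (hne : i ≠ j) (h1 : -(Bfm n i j) = Bfm n i i)
      (h2 : Bfm n i i ≠ 0) :
      NRel (fbrF K n χ (αr n i) (αr n i + (αr n i + αr n j)) (fF K n i)
        (fbrF K n χ (αr n i) (αr n i + αr n j) (fF K n i)
          (fbrF K n χ (αr n i) (αr n j) (fF K n i) (fF K n j)))) 0
  | SF4 (i j k : Fin (2 * n)) (h1 : i ≠ j) (h2 : j ≠ k) (h3 : k ≠ i)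
      (h4 : Bfm n i i = 0) (h5 : Bfm n j k = 0)
      (h6 : -(Bfm n i j) = Bfm n i k) (h7 : Bfm n i k ≠ 0) :
      NRel (fbrF K n χ (αr n i + αr n j) (αr n i + αr n k)
        (fbrF K n χ (αr n i) (αr n j) (fF K n i) (fF K n j))
        (fbrF K n χ (αr n i) (αr n k) (fF K n i) (fF K n k))) 0

/-- The quantum affine superalgebra `U^♮_χ` of `sl^{(1)}(n|n)`. -/
abbrev Unat : Type := RingQuot (NRel K n χ)

def uK (a : Lam n) : Unat K n χ := RingQuot.mkAlgHom K (NRel K n χ) (fK K n a)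
def uL (a : Lam n) : Unat K n χ := RingQuot.mkAlgHom K (NRel K n χ) (fL K n a)
def uE (i : Fin (2 * n)) : Unat K n χ := RingQuot.mkAlgHom K (NRel K n χ) (fE K n i)
def uF (i : Fin (2 * n)) : Unat K n χ := RingQuot.mkAlgHom K (NRel K n χ) (fF K n i)

/-- `E` reindexed by `ℕ` (junk value `0` out of range). -/
def uEn (t : ℕ) : Unat K n χ := if h : t < 2 * n then uE K n χ ⟨t, h⟩ else 0

/-- The `q`-bracket in `U^♮_χ` (for `X` of degree `λ` and `Y` of degree `μ`). -/
def ubrE (lam mu : Lam n) (X Y : Unat K n χ) : Unat K n χ :=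
  X * Y - ((((χ mu lam)⁻¹ : Kˣ) : K)) • (Y * X)

/-- `deg B_i = Σ_{t=i+1}^{N−i−1} α_t`. -/
def degB (i : ℕ) : Lam n := ∑ t ∈ Finset.Icc (i + 1) (2 * n - i - 1), αn n t

/-- `C j := B_{n−1−j}` : `C 0 = E_n`,
`C (j+1) = ⌊E_{n+j+1}, ⌊C j, E_{n−1−j}⌋⌋`. -/
def Cseq : ℕ → Unat K n χ
  | 0 => uEn K n χ n
  | j + 1 =>
      ubrE K n χ (αn n (n + j + 1)) (degB n (n - 1 - j) + αn n (n - 1 - j))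
        (uEn K n χ (n + j + 1))
        (ubrE K n χ (degB n (n - 1 - j)) (αn n (n - 1 - j)) (Cseq j) (uEn K n χ (n - 1 - j)))

/-- `B_i` (for `i ∈ {0,…,n−1}`): `B_{n−1} = E_n`,
`B_i = ⌊E_{N−i−1}, ⌊B_{i+1}, E_{i+1}⌋⌋`. -/
def Bseq (i : ℕ) : Unat K n χ := Cseq K n χ (n - 1 - i)

/-- `deg A_i = α_0 + Σ_{t=1}^{i} α_t + Σ_{t=N−i}^{N−1} α_t`. -/
def degA (i : ℕ) : Lam n :=
  αn n 0 + (∑ t ∈ Finset.Icc 1 i, αn n t) + ∑ t ∈ Finset.Icc (2 * n - i) (2 * n - 1), αn n t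

/-- `A_0 = E_0`, `A_i = ⌊E_{N−i}, ⌊A_{i−1}, E_i⌋⌋`. -/
def Aseq : ℕ → Unat K n χ
  | 0 => uEn K n χ 0
  | i + 1 =>
      ubrE K n χ (αn n (2 * n - i - 1)) (degA n i + αn n (i + 1))
        (uEn K n χ (2 * n - i - 1))
        (ubrE K n χ (degA n i) (αn n (i + 1)) (Aseq i) (uEn K n χ (i + 1)))

/-- The scalars `a_i`. -/
def aScal : ℕ → K
  | 0 => 1
  | i + 1 =>
      aScal i * (χ (hatδ n) (αn n (2 * n - i - 1)) : K)
        * (χ (-αn n (i + 1)) (∑ t ∈ Finset.Icc (i + 2) (2 * n - i - 2), αn n t) : K)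
        * (χ (∑ t ∈ Finset.Icc (i + 1) (2 * n - i - 2), αn n t) (-αn n (2 * n - i - 1)) : K)

/-- The element `Z = Σ_{i=0}^{n−1} a_i ⌊A_i, B_i⌋` of `U^♮_χ`. -/
def Zel : Unat K n χ :=
  ∑ i ∈ Finset.range n,
    aScal K n χ i • ubrE K n χ (degA n i) (degB n i) (Aseq K n χ i) (Bseq K n χ i)

end Defs

section Rep

variable (K : Type) [Field K] (n : ℕ)

/-- The representation space `K^N ⊗ K[t,t⁻¹]`, with basis `e_k ⊗ t^m`. -/
abbrev VRep : Type := (Fin (2 * n) × ℤ) →₀ K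

/-- The basis vector `e_k ⊗ t^m`. -/
noncomputable def basV (k : Fin (2 * n)) (m : ℤ) : VRep K n := Finsupp.single (k, m) 1

/-- `d̄_i` (1-based), as an integer exponent. -/
def dZ1 (i : ℕ) : ℤ := if i ≤ n then 1 else -1

/-- `d̄_i` (1-based), as a scalar. -/
def dK1 (i : ℕ) : K := if i ≤ n then 1 else -1

variable (χ : Lam n → Lam n → Kˣ) (q : Kˣ) (z u : Fin (2 * n) → Kˣ)

/-- The eigenvalue of `Ψ(K_{α_i})` on `e_k ⊗ t^m` (`k` 0-based):
`z_i Π_{s=0}^{k} x_{is}⁻¹`. -/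
def lamK (i : Fin (2 * n)) (k : ℕ) : Kˣ :=
  z i * ∏ s ∈ Finset.range (k + 1), (χ (αr n i) (αn n s))⁻¹

/-- The eigenvalue of `Ψ(L_{α_i})` on `e_k ⊗ t^m` (`k` 0-based):
`z_i q^{−2(ε_N,α_i)} Π_{s=0}^{k} x_{si}`. -/
def lamL (i : Fin (2 * n)) (k : ℕ) : Kˣ :=
  z i * q ^ (-(2 * epsNdot n i)) * ∏ s ∈ Finset.range (k + 1), χ (αn n s) (αr n i)

/-- The coefficient of `Ψ(E_0) = z_0u_0 d̄_1 q^{d̄_1}(q−q⁻¹) e_{N1} ⊗ t`. -/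
def cE0 (hpos : 0 < n) : K :=
  ((z ⟨0, by omega⟩ * u ⟨0, by omega⟩ : Kˣ) : K) * dK1 K n 1 * ((q ^ dZ1 n 1 : Kˣ) : K)
    * ((q : K) - ((q⁻¹ : Kˣ) : K))

/-- The coefficient of
`Ψ(E_i) = −z_iu_i d̄_i q^{−d̄_i}(Π_{s=0}^{i−1} x_{is}⁻¹)(q−q⁻¹) e_{i,i+1}`. -/
def cEi (i : Fin (2 * n)) : K :=
  -(((z i * u i : Kˣ) : K) * dK1 K n (i : ℕ) * ((q ^ (-dZ1 n (i : ℕ)) : Kˣ) : K)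
    * ((∏ s ∈ Finset.range (i : ℕ), (χ (αr n i) (αn n s))⁻¹ : Kˣ) : K)
    * ((q : K) - ((q⁻¹ : Kˣ) : K)))

end Rep

/-! In the vector representation `E_0` acts as a multiple of `e_{N1} ⊗ t` and `E_i` (`i ≥ 1`) as a
multiple of `e_{i,i+1}`. In each of the nested brackets defining `A_i` and `B_i` exactly one of the
two products of matrix units is nonzero, so `A_i` acts as a multiple of `e_{N-i,i+1} ⊗ t` and `B_i`
as a multiple of `e_{i+1,N-i}`. Since `deg A_i + deg B_i = δ̂` and `χ(deg B_i, deg B_i) = −1`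
(peeling `α_{i+1}` and `α_{N-i-1}` off `deg B_i` changes nothing, and `χ(α_n, α_n) = −1`), the
bracket `⌊A_i, B_i⌋` is the anticommutator `A_iB_i + B_iA_i`, a multiple of
`(e_{i+1,i+1} + e_{N-i,N-i}) ⊗ t`. The scalars `a_i` are exactly the ratios that make these
multiples independent of `i`, and summing over `i` gives `b (1_N ⊗ t)`. -/

theorem prod_zpow_eq_zpow_sum {G ι : Type*} [CommGroup G] (g : G) (s : Finset ι) (f : ι → ℤ) :
    ∏ t ∈ s, g ^ f t = g ^ ∑ t ∈ s, f t := by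
  classical
  induction s using Finset.induction_on with
  | empty => simp
  | insert a s ha ih => rw [Finset.prod_insert ha, Finset.sum_insert ha, ih, zpow_add]

theorem sum_Icc_eq_add_sum_Icc_succ {M : Type*} [AddCommMonoid M] (f : ℕ → M) {a b : ℕ}
    (h : a ≤ b) : ∑ t ∈ Finset.Icc a b, f t = f a + ∑ t ∈ Finset.Icc (a + 1) b, f t := by
  rw [← Finset.insert_Icc_succ_left_eq_Icc h, Finset.sum_insert (by simp), Order.succ_eq_add_one]

theorem sum_Icc_consecutive {M : Type*} [AddCommMonoid M] (f : ℕ → M) {a b c : ℕ}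
    (hab : a ≤ b + 1) (hbc : b ≤ c) :
    ∑ t ∈ Finset.Icc a c, f t = ∑ t ∈ Finset.Icc a b, f t + ∑ t ∈ Finset.Icc (b + 1) c, f t := by
  rw [← Finset.sum_union (Finset.disjoint_left.mpr fun x hx hx' => by simp at hx hx'; omega)]
  exact Finset.sum_congr (by ext; simp; omega) fun _ _ => rfl

theorem range_eq_insert_Icc {m : ℕ} (hm : 0 < m) :
    Finset.range m = insert 0 (Finset.Icc 1 (m - 1)) := by
  ext x; simp; omega

structure IsBicharacter {Λ G : Type*} [Add Λ] [Mul G] (χ : Λ → Λ → G) : Prop where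
  map_add_left : ∀ a b c, χ (a + b) c = χ a c * χ b c
  map_add_right : ∀ a b c, χ a (b + c) = χ a b * χ a c

namespace IsBicharacter

variable {Λ G ι : Type*} [AddCommGroup Λ] [CommGroup G] {χ : Λ → Λ → G}

theorem map_zero_left (hχ : IsBicharacter χ) (c : Λ) : χ 0 c = 1 := by
  simpa using hχ.map_add_left 0 0 c

theorem map_zero_right (hχ : IsBicharacter χ) (a : Λ) : χ a 0 = 1 := by
  simpa using hχ.map_add_right a 0 0

theorem map_neg_left (hχ : IsBicharacter χ) (a c : Λ) : χ (-a) c = (χ a c)⁻¹ :=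
  eq_inv_of_mul_eq_one_left <| by rw [← hχ.map_add_left, neg_add_cancel, hχ.map_zero_left]

theorem map_neg_right (hχ : IsBicharacter χ) (a c : Λ) : χ a (-c) = (χ a c)⁻¹ :=
  eq_inv_of_mul_eq_one_left <| by rw [← hχ.map_add_right, neg_add_cancel, hχ.map_zero_right]

theorem map_sum_left (hχ : IsBicharacter χ) (s : Finset ι) (f : ι → Λ) (c : Λ) :
    χ (∑ t ∈ s, f t) c = ∏ t ∈ s, χ (f t) c := by
  classical
  induction s using Finset.induction_on with
  | empty => exact hχ.map_zero_left c
  | insert a s ha ih => rw [Finset.sum_insert ha, Finset.prod_insert ha, hχ.map_add_left, ih]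

theorem map_sum_right (hχ : IsBicharacter χ) (s : Finset ι) (a : Λ) (f : ι → Λ) :
    χ a (∑ t ∈ s, f t) = ∏ t ∈ s, χ a (f t) := by
  classical
  induction s using Finset.induction_on with
  | empty => exact hχ.map_zero_right a
  | insert b s hb ih => rw [Finset.sum_insert hb, Finset.prod_insert hb, hχ.map_add_right, ih]

theorem map_add_self (hχ : IsBicharacter χ) (a b : Λ) :
    χ (a + b) (a + b) = χ a a * χ b b * (χ a b * χ b a) := by
  simp only [hχ.map_add_left, hχ.map_add_right]
  ac_rfl

end IsBicharacter

/-- `d̄_{p+1}`, the parity sign of the `ε`-index `p` (0-based). -/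
def sgnEps (n p : ℕ) : ℤ := if p < n then 1 else -1

/-- The `ε`-coordinate vector of `ε_{p+1}` (0-based); it is `0` for `p ≥ 2n`. -/
def epsVec (n p : ℕ) : Fin (2 * n) → ℤ := fun t => if (t : ℕ) = p then 1 else 0

/-- The form `(·,·)` in `ε`-coordinates. -/
def epsForm (n : ℕ) : (Fin (2 * n) → ℤ) →ₗ[ℤ] (Fin (2 * n) → ℤ) →ₗ[ℤ] ℤ :=
  LinearMap.mk₂ ℤ (fun v w => ∑ t : Fin (2 * n), sgnEps n t * v t * w t)
    (fun _ _ _ => by simp only [Pi.add_apply, mul_add, add_mul, Finset.sum_add_distrib])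
    (fun _ _ _ => by
      simp only [Pi.smul_apply, smul_eq_mul, Finset.mul_sum]
      exact Finset.sum_congr rfl fun _ _ => by ring)
    (fun _ _ _ => by simp only [Pi.add_apply, mul_add, Finset.sum_add_distrib])
    (fun _ _ _ => by
      simp only [Pi.smul_apply, smul_eq_mul, Finset.mul_sum]
      exact Finset.sum_congr rfl fun _ _ => by ring)

theorem Bfm_eq_epsForm (n i j : ℕ) : Bfm n i j = epsForm n (wVec n i) (wVec n j) := rfl

theorem epsForm_epsVec {n p : ℕ} (hp : p < 2 * n) (s : ℕ) :
    epsForm n (epsVec n p) (epsVec n s) = if p = s then sgnEps n p else 0 := by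
  rw [epsForm, LinearMap.mk₂_apply, Finset.sum_eq_single ⟨p, hp⟩]
  · by_cases h : p = s <;> simp [epsVec, h]
  · intro t _ ht
    simp [epsVec, Fin.ext_iff.not.mp ht]
  · simp

theorem epsForm_epsVec_sub {n a b : ℕ} (ha : a < 2 * n) (hb : b < 2 * n) (c d : ℕ) :
    epsForm n (epsVec n a - epsVec n b) (epsVec n c - epsVec n d)
      = (if a = c then sgnEps n a else 0) - (if b = c then sgnEps n b else 0)
        - ((if a = d then sgnEps n a else 0) - (if b = d then sgnEps n b else 0)) := by
  simp only [map_sub, LinearMap.sub_apply, epsForm_epsVec ha, epsForm_epsVec hb]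

theorem wVec_zero (n : ℕ) : wVec n 0 = epsVec n (2 * n - 1) - epsVec n 0 := by
  funext t; simp [wVec, epsVec]

theorem wVec_of_ne_zero {n i : ℕ} (hi : i ≠ 0) : wVec n i = epsVec n (i - 1) - epsVec n i := by
  funext t; simp [wVec, epsVec, hi]

theorem sum_Icc_wVec (n : ℕ) {a b : ℕ} (ha : 1 ≤ a) (hab : a ≤ b) :
    ∑ t ∈ Finset.Icc a b, wVec n t = epsVec n (a - 1) - epsVec n b := by
  induction b, hab using Nat.le_induction with
  | base => rw [Finset.Icc_self, Finset.sum_singleton, wVec_of_ne_zero (by omega)]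
  | succ b hb ih =>
    rw [Finset.sum_Icc_succ_top (by omega), ih, wVec_of_ne_zero (by omega), Nat.add_sub_cancel]
    abel

theorem sum_range_wVec {n : ℕ} (hn : 0 < n) : ∑ t ∈ Finset.range (2 * n), wVec n t = 0 := by
  rw [range_eq_insert_Icc (by omega), Finset.sum_insert (by simp), sum_Icc_wVec n le_rfl (by omega),
    wVec_zero]
  abel

theorem Bfm_self {n t : ℕ} (ht0 : t ≠ 0) (ht : t < 2 * n) :
    Bfm n t t = sgnEps n (t - 1) + sgnEps n t := by
  rw [Bfm_eq_epsForm, wVec_of_ne_zero ht0, epsForm_epsVec_sub (by omega) ht]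
  split_ifs <;> omega

theorem αn_of_lt {n t : ℕ} (ht : t < 2 * n) : αn n t = αr n ⟨t, ht⟩ := dif_pos ht

theorem degB_succ (n i : ℕ) :
    degB n (i + 1) = ∑ t ∈ Finset.Icc (i + 2) (2 * n - i - 2), αn n t := by
  rw [degB, show 2 * n - (i + 1) - 1 = 2 * n - i - 2 by omega]

theorem degB_eq_add {n i : ℕ} (h : i + 1 < n) :
    degB n i = αn n (i + 1) + ∑ t ∈ Finset.Icc (i + 2) (2 * n - i - 1), αn n t := by
  rw [degB, sum_Icc_eq_add_sum_Icc_succ _ (by omega)]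

theorem degB_succ_add {n i : ℕ} (h : i + 1 < n) :
    degB n (i + 1) + αn n (2 * n - i - 1) = ∑ t ∈ Finset.Icc (i + 2) (2 * n - i - 1), αn n t := by
  rw [degB_succ, show 2 * n - i - 1 = 2 * n - i - 2 + 1 by omega,
    Finset.sum_Icc_succ_top (by omega)]

theorem degA_add_degB {n i : ℕ} (hi : i < n) : degA n i + degB n i = hatδ n := by
  rw [degA, degB, hatδ, range_eq_insert_Icc (by omega), Finset.sum_insert (by simp),
    sum_Icc_consecutive _ (show 1 ≤ i + 1 by omega) (show i ≤ 2 * n - 1 by omega),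
    sum_Icc_consecutive _ (show i + 1 ≤ 2 * n - i - 1 + 1 by omega)
      (show 2 * n - i - 1 ≤ 2 * n - 1 by omega), show 2 * n - i - 1 + 1 = 2 * n - i by omega]
  abel

section RootBicharacter

variable {K : Type} [Field K] {n : ℕ}

structure IsRootBicharacter (χ : Lam n → Lam n → Kˣ) (q : Kˣ) : Prop extends IsBicharacter χ where
  self_of_ne_zero : ∀ i : Fin (2 * n), Bfm n i i ≠ 0 → χ (αr n i) (αr n i) = q ^ Bfm n i i
  self_of_eq_zero : ∀ i : Fin (2 * n), Bfm n i i = 0 → ((χ (αr n i) (αr n i) : Kˣ) : K) = -1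
  mul_swap_of_ne : ∀ i j : Fin (2 * n), i ≠ j →
    χ (αr n i) (αr n j) * χ (αr n j) (αr n i) = q ^ (2 * Bfm n i j)

namespace IsRootBicharacter

variable {χ : Lam n → Lam n → Kˣ} {q : Kˣ}

theorem apply_αn_self (hχ : IsRootBicharacter χ q) {t : ℕ} (ht : t < 2 * n) (hB : Bfm n t t ≠ 0) :
    χ (αn n t) (αn n t) = q ^ Bfm n t t := by
  rw [αn_of_lt ht]
  exact hχ.self_of_ne_zero ⟨t, ht⟩ hB

theorem apply_αn_mul_swap (hχ : IsRootBicharacter χ q) {s t : ℕ} (hs : s < 2 * n) (ht : t < 2 * n) :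
    χ (αn n s) (αn n t) * χ (αn n t) (αn n s) = q ^ (2 * Bfm n s t) := by
  by_cases hst : s = t
  · subst hst
    by_cases hB : Bfm n s s = 0
    · rw [hB, mul_zero, zpow_zero, Units.ext_iff, Units.val_mul, αn_of_lt hs,
        hχ.self_of_eq_zero ⟨s, hs⟩ hB]
      norm_num
    · rw [hχ.apply_αn_self hs hB, ← zpow_add, two_mul]
  · rw [αn_of_lt hs, αn_of_lt ht]
    exact hχ.mul_swap_of_ne _ _ (Fin.ne_of_val_ne hst)

theorem apply_sum_mul_swap (hχ : IsRootBicharacter χ q) (S : Finset ℕ) (hS : ∀ s ∈ S, s < 2 * n)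
    {t : ℕ} (ht : t < 2 * n) :
    χ (∑ s ∈ S, αn n s) (αn n t) * χ (αn n t) (∑ s ∈ S, αn n s)
      = q ^ (2 * epsForm n (∑ s ∈ S, wVec n s) (wVec n t)) := by
  rw [hχ.map_sum_left, hχ.map_sum_right, ← Finset.prod_mul_distrib,
    Finset.prod_congr rfl fun s hs => hχ.apply_αn_mul_swap (hS s hs) ht, prod_zpow_eq_zpow_sum,
    map_sum, LinearMap.sum_apply, Finset.mul_sum]
  rfl

theorem apply_sum_Icc_mul_swap (hχ : IsRootBicharacter χ q) {a b t : ℕ} (ha : 1 ≤ a) (hab : a ≤ b)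
    (hb : b < 2 * n) (ht0 : t ≠ 0) (ht : t < 2 * n) :
    χ (∑ s ∈ Finset.Icc a b, αn n s) (αn n t) * χ (αn n t) (∑ s ∈ Finset.Icc a b, αn n s)
      = q ^ (2 * epsForm n (epsVec n (a - 1) - epsVec n b) (epsVec n (t - 1) - epsVec n t)) := by
  rw [hχ.apply_sum_mul_swap _ (fun s hs => by simp at hs; omega) ht, sum_Icc_wVec n ha hab,
    wVec_of_ne_zero ht0]

theorem apply_hatδ_αn (hχ : IsRootBicharacter χ q) (hn : 0 < n)
    (hδ : ∀ i : Fin (2 * n), χ (αr n i) (hatδ n) = 1) {t : ℕ} (ht : t < 2 * n) :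
    χ (hatδ n) (αn n t) = 1 := by
  have h := hχ.apply_sum_mul_swap (Finset.range (2 * n)) (fun s hs => Finset.mem_range.mp hs) ht
  rw [sum_range_wVec hn, map_zero, LinearMap.zero_apply, mul_zero, zpow_zero, αn_of_lt ht,
    ← hatδ, hδ, mul_one] at h
  rwa [αn_of_lt ht]

theorem apply_degB_self_succ (hχ : IsRootBicharacter χ q) {i : ℕ} (h : i + 1 < n) :
    χ (degB n i) (degB n i) = χ (degB n (i + 1)) (degB n (i + 1)) := by
  have hx : χ (αn n (i + 1)) (αn n (i + 1)) = q ^ (2 : ℤ) := by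
    have hB : Bfm n (i + 1) (i + 1) = 2 := by
      rw [Bfm_self (by omega) (by omega)]; simp only [sgnEps]; split_ifs <;> omega
    rw [hχ.apply_αn_self (by omega) (by omega), hB]
  have hz : χ (αn n (2 * n - i - 1)) (αn n (2 * n - i - 1)) = q ^ (-2 : ℤ) := by
    have hB : Bfm n (2 * n - i - 1) (2 * n - i - 1) = -2 := by
      rw [Bfm_self (by omega) (by omega)]; simp only [sgnEps]; split_ifs <;> omega
    rw [hχ.apply_αn_self (by omega) (by omega), hB]
  have hyz : χ (degB n (i + 1)) (αn n (2 * n - i - 1)) * χ (αn n (2 * n - i - 1)) (degB n (i + 1))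
      = q ^ (2 : ℤ) := by
    rw [degB_succ, hχ.apply_sum_Icc_mul_swap (by omega) (by omega) (by omega) (by omega) (by omega),
      epsForm_epsVec_sub (by omega) (by omega)]
    congr 1
    simp only [sgnEps]; split_ifs <;> omega
  have hxY : χ (αn n (i + 1)) (∑ t ∈ Finset.Icc (i + 2) (2 * n - i - 1), αn n t)
      * χ (∑ t ∈ Finset.Icc (i + 2) (2 * n - i - 1), αn n t) (αn n (i + 1)) = q ^ (-2 : ℤ) := by
    rw [mul_comm, hχ.apply_sum_Icc_mul_swap (by omega) (by omega) (by omega) (by omega) (by omega),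
      epsForm_epsVec_sub (by omega) (by omega)]
    congr 1
    simp only [sgnEps]; split_ifs <;> omega
  rw [degB_eq_add h, hχ.map_add_self, ← degB_succ_add h, hχ.map_add_self, hx, hz, hyz,
    degB_succ_add h, hxY, mul_right_comm, ← zpow_add]
  simp

theorem apply_degB_self (hχ : IsRootBicharacter χ q) {i : ℕ} (hi : i < n) :
    ((χ (degB n i) (degB n i) : Kˣ) : K) = -1 := by
  obtain ⟨d, hd⟩ : ∃ d, n - 1 - i = d := ⟨_, rfl⟩
  induction d generalizing i with
  | zero =>
    obtain rfl : i = n - 1 := by omega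
    have hB : Bfm n n n = 0 := by
      rw [Bfm_self (by omega) (by omega)]; simp only [sgnEps]; split_ifs <;> omega
    rw [degB, show n - 1 + 1 = n by omega, show 2 * n - (n - 1) - 1 = n by omega,
      Finset.Icc_self, Finset.sum_singleton, αn_of_lt (by omega)]
    exact hχ.self_of_eq_zero _ hB
  | succ d ih =>
    rw [hχ.apply_degB_self_succ (by omega)]
    exact ih (by omega) (by omega)

theorem apply_degB_degA (hχ : IsRootBicharacter χ q)
    (hδ : ∀ i : Fin (2 * n), χ (αr n i) (hatδ n) = 1)
    {i : ℕ} (hi : i < n) : ((χ (degB n i) (degA n i) : Kˣ) : K) = -1 := by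
  have hδB : χ (degB n i) (hatδ n) = 1 := by
    rw [degB, hχ.map_sum_left]
    refine Finset.prod_eq_one fun t ht => ?_
    rw [αn_of_lt (by simp at ht; omega)]
    exact hδ _
  rw [← degA_add_degB hi, hχ.map_add_right, Units.ext_iff, Units.val_mul,
    hχ.apply_degB_self hi, Units.val_one] at hδB
  linear_combination -hδB

end IsRootBicharacter

end RootBicharacter

section MatrixUnits

variable {K : Type} [Field K] {n : ℕ}

variable (K n) in
/-- `e_{k+1} ⊗ t^m` for `k : ℕ` (0-based), with junk value `0` for `k ≥ 2n`. -/
noncomputable def basVn (k : ℕ) (m : ℤ) : VRep K n :=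
  if h : k < 2 * n then basV K n ⟨k, h⟩ m else 0

variable (K n) in
/-- The operator `e_{k+1,l+1} ⊗ t^r` (0-based indices); it is `0` for `l ≥ 2n`. -/
noncomputable def matUnit (k l : ℕ) (r : ℤ) : Module.End K (VRep K n) :=
  Finsupp.linearCombination K fun x => if (x.1 : ℕ) = l then basVn K n k (x.2 + r) else 0

variable (K n) in
/-- The operator `1_N ⊗ t`. -/
noncomputable def idTensorT : Module.End K (VRep K n) :=
  ∑ k ∈ Finset.range (2 * n), matUnit K n k k 1

theorem ext_basV {f g : Module.End K (VRep K n)}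
    (h : ∀ k m, f (basV K n k m) = g (basV K n k m)) : f = g :=
  Finsupp.basisSingleOne.ext fun x => by simpa [Finsupp.coe_basisSingleOne, basV] using h x.1 x.2

theorem matUnit_basV (k l : ℕ) (r : ℤ) (j : Fin (2 * n)) (m : ℤ) :
    matUnit K n k l r (basV K n j m) = if (j : ℕ) = l then basVn K n k (m + r) else 0 := by
  simp [matUnit, basV, Finsupp.linearCombination_single]

theorem matUnit_basVn_of_ne {c l : ℕ} (h : c ≠ l) (k : ℕ) (r m : ℤ) :
    matUnit K n k l r (basVn K n c m) = 0 := by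
  unfold basVn
  split_ifs
  · rw [matUnit_basV, if_neg h]
  · rw [map_zero]

theorem matUnit_basVn_self {l : ℕ} (hl : l < 2 * n) (k : ℕ) (r m : ℤ) :
    matUnit K n k l r (basVn K n l m) = basVn K n k (m + r) := by
  rw [basVn, dif_pos hl, matUnit_basV, if_pos rfl]

theorem matUnit_mul_of_ne {b c : ℕ} (h : b ≠ c) (a d : ℕ) (r s : ℤ) :
    matUnit K n a b r * matUnit K n c d s = 0 := ext_basV fun j m => by
  rw [Module.End.mul_apply, matUnit_basV]
  split_ifs
  · rw [matUnit_basVn_of_ne h.symm, LinearMap.zero_apply]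
  · rw [map_zero, LinearMap.zero_apply]

theorem matUnit_mul_self {b : ℕ} (hb : b < 2 * n) (a d : ℕ) (r s : ℤ) :
    matUnit K n a b r * matUnit K n b d s = matUnit K n a d (r + s) := ext_basV fun j m => by
  rw [Module.End.mul_apply, matUnit_basV, matUnit_basV]
  split_ifs
  · rw [matUnit_basVn_self hb, add_assoc, add_comm s]
  · rw [map_zero]

theorem idTensorT_basV (j : Fin (2 * n)) (m : ℤ) :
    idTensorT K n (basV K n j m) = basV K n j (m + 1) := by
  simp only [idTensorT, LinearMap.sum_apply, matUnit_basV, Finset.sum_ite_eq,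
    Finset.mem_range, j.isLt, if_true, basVn, dif_pos]

theorem sum_range_matUnit_pair (r : ℤ) :
    ∑ i ∈ Finset.range n, (matUnit K n (2 * n - 1 - i) (2 * n - 1 - i) r + matUnit K n i i r)
      = ∑ k ∈ Finset.range (2 * n), matUnit K n k k r := by
  rw [show Finset.range (2 * n) = Finset.range (n + n) by rw [two_mul], Finset.sum_range_add,
    Finset.sum_add_distrib, add_comm,
    ← Finset.sum_range_reflect (fun i => matUnit K n (n + i) (n + i) r)]
  congr 1
  refine Finset.sum_congr rfl fun i hi => ?_
  rw [show n + (n - 1 - i) = 2 * n - 1 - i by simp at hi; omega]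

variable (K) in
/-- The bracket `ubrE` with its coefficient `χ(μ, λ)⁻¹` replaced by an arbitrary `κ`. -/
def qBracket {A : Type*} [Ring A] [Algebra K A] (κ : K) (X Y : A) : A := X * Y - κ • (Y * X)

theorem map_ubrE {χ : Lam n → Lam n → Kˣ} (Ψ : Unat K n χ →ₐ[K] Module.End K (VRep K n))
    (lam mu : Lam n) (X Y : Unat K n χ) :
    Ψ (ubrE K n χ lam mu X Y) = qBracket K (((χ mu lam)⁻¹ : Kˣ) : K) (Ψ X) (Ψ Y) := by
  simp only [ubrE, qBracket, map_sub, map_mul, map_smul]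

theorem qBracket_smul_matUnit_of_left {a b c d : ℕ} (hb : b < 2 * n) (hbc : b = c) (hda : d ≠ a)
    (κ x y : K) (r s : ℤ) :
    qBracket K κ (x • matUnit K n a b r) (y • matUnit K n c d s)
      = (x * y) • matUnit K n a d (r + s) := by
  subst hbc
  rw [qBracket, smul_mul_smul_comm, smul_mul_smul_comm, matUnit_mul_self hb,
    matUnit_mul_of_ne hda]
  simp

theorem qBracket_smul_matUnit_of_right {a b c d : ℕ} (ha : a < 2 * n) (hda : d = a) (hbc : b ≠ c)
    (κ x y : K) (r s : ℤ) :
    qBracket K κ (x • matUnit K n a b r) (y • matUnit K n c d s)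
      = -(κ * (y * x)) • matUnit K n c b (s + r) := by
  subst hda
  rw [qBracket, smul_mul_smul_comm, smul_mul_smul_comm, matUnit_mul_self ha,
    matUnit_mul_of_ne hbc, smul_zero, smul_smul]
  module

theorem qBracket_smul_matUnit_swap {a b : ℕ} (ha : a < 2 * n) (hb : b < 2 * n)
    (κ x y : K) (r s : ℤ) :
    qBracket K κ (x • matUnit K n a b r) (y • matUnit K n b a s)
      = (x * y) • matUnit K n a a (r + s) - (κ * (y * x)) • matUnit K n b b (s + r) := by
  rw [qBracket, smul_mul_smul_comm, smul_mul_smul_comm, matUnit_mul_self hb,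
    matUnit_mul_self ha, smul_smul]

end MatrixUnits

section RootVectors

variable {K : Type} [Field K] {n : ℕ} (χ : Lam n → Lam n → Kˣ) (q : Kˣ) (z u : Fin (2 * n) → Kˣ)

/-- The coefficient of `Ψ(E_t)` for `t : ℕ`, with junk value `1` for `t ≥ 2n`. -/
def coeffE (t : ℕ) : K := if h : t < 2 * n then cEi K n χ q z u ⟨t, h⟩ else 1

/-- The coefficient of `Ψ(A_i)`, given the coefficient `c0` of `Ψ(E_0)`. -/
def coeffA (c0 : K) : ℕ → K
  | 0 => c0
  | i + 1 => coeffE χ q z u (2 * n - i - 1) * (coeffA c0 i * coeffE χ q z u (i + 1))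

/-- The coefficient of `Ψ(C_j)`, i.e. of `Ψ(B_{n-1-j})`. -/
def coeffC : ℕ → K
  | 0 => coeffE χ q z u n
  | j + 1 =>
    (((χ (degB n (n - 1 - j) + αn n (n - 1 - j)) (αn n (n + j + 1)))⁻¹ : Kˣ) : K)
      * (((χ (αn n (n - 1 - j)) (degB n (n - 1 - j)))⁻¹ : Kˣ) : K)
      * coeffE χ q z u (n + j + 1) * coeffE χ q z u (n - 1 - j) * coeffC j

variable {χ q z u} (Ψ : Unat K n χ →ₐ[K] Module.End K (VRep K n))

theorem map_uEn_zero (hpos : 0 < n)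
    (hE0 : ∀ (k : Fin (2 * n)) (m : ℤ), Ψ (uE K n χ ⟨0, by omega⟩) (basV K n k m)
      = if (k : ℕ) = 0 then cE0 K n q z u hpos • basV K n ⟨2 * n - 1, by omega⟩ (m + 1) else 0) :
    Ψ (uEn K n χ 0) = cE0 K n q z u hpos • matUnit K n (2 * n - 1) 0 1 := ext_basV fun k m => by
  rw [uEn, dif_pos (by omega), hE0, LinearMap.smul_apply, matUnit_basV, basVn, dif_pos (by omega)]
  split_ifs <;> simp

theorem map_uEn_of_pos (h0 : 0 < 2 * n)
    (hEi : ∀ i : Fin (2 * n), i ≠ ⟨0, h0⟩ → ∀ (k : Fin (2 * n)) (m : ℤ),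
      Ψ (uE K n χ i) (basV K n k m) = if (k : ℕ) = (i : ℕ)
        then cEi K n χ q z u i • basV K n ⟨(i : ℕ) - 1, (Nat.sub_le _ _).trans_lt i.isLt⟩ m
        else 0)
    {t : ℕ} (ht0 : 0 < t) (ht : t < 2 * n) :
    Ψ (uEn K n χ t) = coeffE χ q z u t • matUnit K n (t - 1) t 0 := ext_basV fun k m => by
  rw [uEn, dif_pos ht, hEi _ (by simp [Fin.ext_iff]; omega), LinearMap.smul_apply, matUnit_basV,
    basVn, dif_pos (by omega), coeffE, dif_pos ht, add_zero]
  split_ifs <;> simp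

variable (c0 : K) (hE0 : Ψ (uEn K n χ 0) = c0 • matUnit K n (2 * n - 1) 0 1)
  (hE : ∀ t, 0 < t → t < 2 * n → Ψ (uEn K n χ t) = coeffE χ q z u t • matUnit K n (t - 1) t 0)

include hE0 hE in
theorem map_Aseq {i : ℕ} (hi : i < n) :
    Ψ (Aseq K n χ i) = coeffA χ q z u c0 i • matUnit K n (2 * n - 1 - i) i 1 := by
  induction i with
  | zero => exact hE0
  | succ i ih =>
    rw [Aseq, map_ubrE, map_ubrE, ih (by omega), hE (i + 1) (by omega) (by omega),
      hE (2 * n - i - 1) (by omega) (by omega),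
      qBracket_smul_matUnit_of_left (by omega) (by omega) (by omega),
      qBracket_smul_matUnit_of_left (by omega) (by omega) (by omega),
      show 2 * n - i - 1 - 1 = 2 * n - 1 - (i + 1) by omega]
    rfl

include hE in
theorem map_Cseq {j : ℕ} (hj : j < n) :
    Ψ (Cseq K n χ j) = coeffC χ q z u j • matUnit K n (n - 1 - j) (n + j) 0 := by
  induction j with
  | zero => simpa [Cseq, coeffC] using hE n (by omega) (by omega)
  | succ j ih =>
    rw [Cseq, map_ubrE, map_ubrE, ih (by omega), hE (n - 1 - j) (by omega) (by omega),
      hE (n + j + 1) (by omega) (by omega),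
      qBracket_smul_matUnit_of_right (by omega) (by omega) (by omega),
      qBracket_smul_matUnit_of_right (by omega) (by omega) (by omega),
      show n - 1 - j - 1 = n - 1 - (j + 1) by omega, ← add_assoc, coeffC]
    congr 1
    ring

include hE in
theorem map_Bseq {i : ℕ} (hi : i < n) :
    Ψ (Bseq K n χ i) = coeffC χ q z u (n - 1 - i) • matUnit K n i (2 * n - 1 - i) 0 := by
  rw [Bseq, map_Cseq Ψ hE (by omega), show n - 1 - (n - 1 - i) = i by omega,
    show n + (n - 1 - i) = 2 * n - 1 - i by omega]

include hE0 hE in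
theorem map_ubrE_Aseq_Bseq (hχ : IsRootBicharacter χ q)
    (hδ : ∀ i : Fin (2 * n), χ (αr n i) (hatδ n) = 1) {i : ℕ} (hi : i < n) :
    Ψ (ubrE K n χ (degA n i) (degB n i) (Aseq K n χ i) (Bseq K n χ i))
      = (coeffA χ q z u c0 i * coeffC χ q z u (n - 1 - i))
        • (matUnit K n (2 * n - 1 - i) (2 * n - 1 - i) 1 + matUnit K n i i 1) := by
  rw [map_ubrE, map_Aseq Ψ c0 hE0 hE hi, map_Bseq Ψ hE hi,
    qBracket_smul_matUnit_swap (by omega) (by omega), Units.val_inv_eq_inv_val,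
    hχ.apply_degB_degA hδ hi, add_zero, zero_add, inv_neg_one, neg_one_mul, mul_comm (coeffC χ q z u _)]
  module

end RootVectors

section Scalars

variable {K : Type} [Field K] {n : ℕ} {χ : Lam n → Lam n → Kˣ} {q : Kˣ} {z u : Fin (2 * n) → Kˣ}

theorem dK1_ne_zero (i : ℕ) : dK1 K n i ≠ 0 := by
  unfold dK1; split_ifs <;> norm_num

theorem cE0_ne_zero (hq : (q : K) - ((q⁻¹ : Kˣ) : K) ≠ 0) (hpos : 0 < n) :
    cE0 K n q z u hpos ≠ 0 := by
  unfold cE0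
  simp only [ne_eq, mul_eq_zero, Units.ne_zero, dK1_ne_zero, hq, or_self, not_false_eq_true]

theorem cEi_ne_zero (hq : (q : K) - ((q⁻¹ : Kˣ) : K) ≠ 0) (i : Fin (2 * n)) :
    cEi K n χ q z u i ≠ 0 := by
  unfold cEi
  simp only [ne_eq, neg_eq_zero, mul_eq_zero, Units.ne_zero, dK1_ne_zero, hq, or_self,
    not_false_eq_true]

theorem coeffE_ne_zero (hq : (q : K) - ((q⁻¹ : Kˣ) : K) ≠ 0) (t : ℕ) : coeffE χ q z u t ≠ 0 := by
  unfold coeffE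
  split_ifs
  exacts [cEi_ne_zero hq _, one_ne_zero]

theorem coeffC_ne_zero (hq : (q : K) - ((q⁻¹ : Kˣ) : K) ≠ 0) (j : ℕ) : coeffC χ q z u j ≠ 0 := by
  induction j with
  | zero => exact coeffE_ne_zero hq _
  | succ j ih => simp [coeffC, coeffE_ne_zero hq, ih]

theorem coeffC_sub_eq_mul {i : ℕ} (h : i + 1 < n) :
    coeffC χ q z u (n - 1 - i)
      = (((χ (degB n (i + 1) + αn n (i + 1)) (αn n (2 * n - i - 1)))⁻¹ : Kˣ) : K)
        * (((χ (αn n (i + 1)) (degB n (i + 1)))⁻¹ : Kˣ) : K)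
        * coeffE χ q z u (2 * n - i - 1) * coeffE χ q z u (i + 1)
        * coeffC χ q z u (n - 1 - (i + 1)) := by
  obtain ⟨j, hj⟩ : ∃ j, n - 1 - i = j + 1 := ⟨n - 2 - i, by omega⟩
  rw [hj, coeffC, show n - 1 - j = i + 1 by omega, show n + j + 1 = 2 * n - i - 1 by omega,
    show n - 1 - (i + 1) = j by omega]

theorem aScal_mul_coeff_succ (hχ : IsRootBicharacter χ q)
    (hδ : ∀ i : Fin (2 * n), χ (αr n i) (hatδ n) = 1) (c0 : K) {i : ℕ} (h : i + 1 < n) :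
    aScal K n χ (i + 1) * (coeffA χ q z u c0 (i + 1) * coeffC χ q z u (n - 1 - (i + 1)))
      = aScal K n χ i * (coeffA χ q z u c0 i * coeffC χ q z u (n - 1 - i)) := by
  have hsum : ∑ t ∈ Finset.Icc (i + 1) (2 * n - i - 2), αn n t = degB n (i + 1) + αn n (i + 1) := by
    rw [sum_Icc_eq_add_sum_Icc_succ _ (by omega), degB_succ, add_comm]
  rw [coeffC_sub_eq_mul h, aScal, hχ.apply_hatδ_αn (by omega) hδ (by omega), hχ.map_neg_left,
    hχ.map_neg_right, ← degB_succ, hsum, coeffA]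
  simp only [Units.val_one, mul_one, Units.val_inv_eq_inv_val]
  ring

theorem aScal_mul_coeff_eq (hχ : IsRootBicharacter χ q)
    (hδ : ∀ i : Fin (2 * n), χ (αr n i) (hatδ n) = 1) (c0 : K) {i : ℕ} (hi : i < n) :
    aScal K n χ i * (coeffA χ q z u c0 i * coeffC χ q z u (n - 1 - i))
      = c0 * coeffC χ q z u (n - 1) := by
  induction i with
  | zero => simp [aScal, coeffA]
  | succ i ih => rw [aScal_mul_coeff_succ hχ hδ c0 hi, ih (by omega)]

end Scalars

theorem map_Zel {K : Type} [Field K] {n : ℕ} {χ : Lam n → Lam n → Kˣ} {q : Kˣ}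
    {z u : Fin (2 * n) → Kˣ} (Ψ : Unat K n χ →ₐ[K] Module.End K (VRep K n))
    (hχ : IsRootBicharacter χ q) (hδ : ∀ i : Fin (2 * n), χ (αr n i) (hatδ n) = 1) (c0 : K)
    (hE0 : Ψ (uEn K n χ 0) = c0 • matUnit K n (2 * n - 1) 0 1)
    (hE : ∀ t, 0 < t → t < 2 * n → Ψ (uEn K n χ t) = coeffE χ q z u t • matUnit K n (t - 1) t 0) :
    Ψ (Zel K n χ) = (c0 * coeffC χ q z u (n - 1)) • idTensorT K n := by
  rw [Zel, map_sum, idTensorT, ← sum_range_matUnit_pair, Finset.smul_sum]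
  refine Finset.sum_congr rfl fun i hi => ?_
  have hi : i < n := Finset.mem_range.mp hi
  rw [map_smul, map_ubrE_Aseq_Bseq Ψ c0 hE0 hE hχ hδ hi, smul_smul, aScal_mul_coeff_eq hχ hδ c0 hi]

/-- if `Ψ` is the vector representation of `U^♮_χ` (case of
`sl^{(1)}(n|n)`), then `Ψ(Z) = b·(1_N ⊗ t)` for some `b ∈ K^×`, i.e.
`Ψ(Z)(e_k ⊗ t^m) = b·e_k ⊗ t^{m+1}` for all `k`, `m`. -/
theorem stmt14 (K : Type) [Field K] (n : ℕ) (hn : 2 ≤ n)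
    (q : Kˣ) (hq : ∀ m : ℕ, 0 < m → (q : K) ^ m ≠ 1)
    (χ : Lam n → Lam n → Kˣ)
    (hχ1 : ∀ a b c : Lam n, χ (a + b) c = χ a c * χ b c)
    (hχ2 : ∀ a b c : Lam n, χ a (b + c) = χ a b * χ a c)
    (hχd : ∀ i : Fin (2 * n), Bfm n i i ≠ 0 → χ (αr n i) (αr n i) = q ^ (Bfm n i i))
    (hχ0 : ∀ i : Fin (2 * n), Bfm n i i = 0 → ((χ (αr n i) (αr n i) : Kˣ) : K) = -1)
    (hχij : ∀ i j : Fin (2 * n), i ≠ j →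
      χ (αr n i) (αr n j) * χ (αr n j) (αr n i) = q ^ (2 * Bfm n i j))
    (hδ : ∀ i : Fin (2 * n), χ (αr n i) (hatδ n) = 1)
    (z u : Fin (2 * n) → Kˣ)
    (Ψ : Unat K n χ →ₐ[K] Module.End K (VRep K n))
    (hE0 : ∀ (k : Fin (2 * n)) (m : ℤ),
      Ψ (uE K n χ ⟨0, by omega⟩) (basV K n k m)
        = if (k : ℕ) = 0 then cE0 K n q z u (by omega) • basV K n ⟨2 * n - 1, by omega⟩ (m + 1)
          else 0)
    (hEi : ∀ (i : Fin (2 * n)), i ≠ ⟨0, by omega⟩ → ∀ (k : Fin (2 * n)) (m : ℤ),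
      Ψ (uE K n χ i) (basV K n k m)
        = if (k : ℕ) = (i : ℕ)
          then cEi K n χ q z u i • basV K n ⟨(i : ℕ) - 1, by omega⟩ m
          else 0) :
    ∃ b : Kˣ, ∀ (k : Fin (2 * n)) (m : ℤ),
      Ψ (Zel K n χ) (basV K n k m) = (b : K) • basV K n k (m + 1) := by
  have hq' : (q : K) - ((q⁻¹ : Kˣ) : K) ≠ 0 := fun h => hq 2 two_pos <| by
    rw [sq]; nth_rewrite 2 [sub_eq_zero.mp h]; exact Units.mul_inv q
  have hχ : IsRootBicharacter χ q := ⟨⟨hχ1, hχ2⟩, hχd, hχ0, hχij⟩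
  have hpos : 0 < n := by omega
  refine ⟨Units.mk0 (cE0 K n q z u hpos * coeffC χ q z u (n - 1))
    (mul_ne_zero (cE0_ne_zero hq' hpos) (coeffC_ne_zero hq' _)), fun k m => ?_⟩
  rw [map_Zel Ψ hχ hδ _ (map_uEn_zero Ψ hpos hE0)
      (fun t ht0 ht => map_uEn_of_pos Ψ (by omega) hEi ht0 ht),
    LinearMap.smul_apply, idTensorT_basV, Units.val_mk0]
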